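/- For every ω₀ > 0 and every integer x, the integral ∫₀¹ cos(2πux)/(4 sin²(πu) + ω₀²) du equals (1/(ω₀ √(ω₀² + 4))) · (1 + ω₀²/2 + ω₀ √(1 + ω₀²/4))^(−|x|). -/

import Mathlib

/-!
The Poisson integral formula on the unit disc, applied to the holomorphic function `z ^ n` and
followed by taking real parts, says that the Fourier coefficients of the Poisson kernel
`(1 - ρ²) / (1 - 2ρ cos θ + ρ²)` are `ρ ^ |n|`. The base `r` of the closed form solves
`r + r⁻¹ = 2 + ω₀²`, so for `ρ = r⁻¹ ∈ (0, 1)` the symbol `4 sin² (πu) + ω₀²` of `ω₀² - Δ` equals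
`(1 - 2ρ cos (2πu) + ρ²) / ρ`, and the Green's function is `ρ ^ |x|` times
`(r - r⁻¹)⁻¹ = (ω₀ √(ω₀² + 4))⁻¹`.
-/

open Real Complex Metric intervalIntegral

lemma circleAverage_eq_integral_zero_one {E : Type*} [NormedAddCommGroup E] [NormedSpace ℝ E]
    (f : ℂ → E) (c : ℂ) (R : ℝ) :
    circleAverage f c R = ∫ u in (0:ℝ)..1, f (circleMap c R (2 * π * u)) := by
  rw [circleAverage_def, integral_comp_mul_left (fun θ ↦ f (circleMap c R θ)) (by positivity),
    mul_zero, mul_one]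

lemma poissonKernel_zero_circleMap_one (ρ θ : ℝ) :
    poissonKernel 0 ρ (circleMap 0 1 θ) = (1 - ρ ^ 2) / (1 - 2 * ρ * Real.cos θ + ρ ^ 2) := by
  have h : ‖circleMap 0 1 θ - ρ‖ ^ 2 = 1 - 2 * ρ * Real.cos θ + ρ ^ 2 := by
    rw [← Complex.normSq_eq_norm_sq, circleMap_zero, Complex.normSq_apply]
    simp only [ofReal_one, one_mul, sub_re, sub_im, exp_ofReal_mul_I_re, exp_ofReal_mul_I_im,
      ofReal_re, ofReal_im, sub_zero]
    linear_combination Real.sin_sq_add_cos_sq θ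
  simp [poissonKernel_def, h, norm_circleMap_zero]

lemma circleAverage_poissonKernel_mul_re_pow {ρ : ℝ} (hρ : |ρ| < 1) (n : ℕ) :
    circleAverage (fun z ↦ poissonKernel 0 ρ z * (z ^ n).re) 0 1 = ρ ^ n := by
  have hρ_mem : (ρ : ℂ) ∈ ball 0 1 := by simpa using hρ
  have hint : CircleIntegrable (poissonKernel 0 ρ • fun z : ℂ ↦ z ^ n) 0 1 := by
    refine ContinuousOn.circleIntegrable zero_le_one (ContinuousOn.smul ?_ (by fun_prop))
    refine ContinuousOn.div (by fun_prop) (by fun_prop) fun z hz ↦ ?_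
    have : z ≠ ρ := by rintro rfl; simp_all
    simpa [sub_eq_zero] using this
  have h := reCLM.circleAverage_comp_comm hint
  rw [(Differentiable.diffContOnCl (by fun_prop)).circleAverage_poissonKernel_smul hρ_mem] at h
  simpa [Function.comp_def, ← ofReal_pow] using h

theorem integral_cos_mul_poissonKernel {ρ : ℝ} (hρ : |ρ| < 1) (k : ℤ) :
    ∫ u in (0:ℝ)..1, Real.cos (2 * π * u * k) *
        ((1 - ρ ^ 2) / (1 - 2 * ρ * Real.cos (2 * π * u) + ρ ^ 2)) = ρ ^ |k| := by
  suffices h : ∀ n : ℕ, ∫ u in (0:ℝ)..1, Real.cos (2 * π * u * n) *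
      ((1 - ρ ^ 2) / (1 - 2 * ρ * Real.cos (2 * π * u) + ρ ^ 2)) = ρ ^ n by
    obtain ⟨n, rfl | rfl⟩ := Int.eq_nat_or_neg k
    · simpa using h n
    · simpa [mul_neg, Real.cos_neg] using h n
  intro n
  rw [← circleAverage_poissonKernel_mul_re_pow hρ n, circleAverage_eq_integral_zero_one]
  congr 1 with u
  rw [poissonKernel_zero_circleMap_one, circleMap_zero_pow, circleMap_zero, one_pow, ofReal_one,
    one_mul, exp_ofReal_mul_I_re, mul_comm (n : ℝ)]
  ring

lemma inv_four_sin_sq_add_eq {ρ : ℝ} (hρ₀ : ρ ≠ 0) (hρ₁ : ρ ^ 2 ≠ 1) (u : ℝ) :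
    (4 * Real.sin (π * u) ^ 2 + (ρ + ρ⁻¹ - 2))⁻¹
      = (ρ⁻¹ - ρ)⁻¹ * ((1 - ρ ^ 2) / (1 - 2 * ρ * Real.cos (2 * π * u) + ρ ^ 2)) := by
  have hsymbol : 4 * Real.sin (π * u) ^ 2 + (ρ + ρ⁻¹ - 2)
      = (1 - 2 * ρ * Real.cos (2 * π * u) + ρ ^ 2) / ρ := by
    rw [Real.sin_sq_eq_half_sub, ← mul_assoc]
    field_simp
    ring
  have hfactor : ρ⁻¹ - ρ = (1 - ρ ^ 2) / ρ := by field_simp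
  rw [hsymbol, hfactor, inv_div, inv_div, div_mul_div_cancel₀ (sub_ne_zero.2 hρ₁.symm)]

lemma inv_one_add_sq_div_two_add_mul_sqrt (ω : ℝ) :
    (1 + ω ^ 2 / 2 + ω * √(1 + ω ^ 2 / 4))⁻¹ = 1 + ω ^ 2 / 2 - ω * √(1 + ω ^ 2 / 4) := by
  refine inv_eq_of_mul_eq_one_right ?_
  linear_combination (-ω ^ 2) * Real.sq_sqrt (by positivity : (0:ℝ) ≤ 1 + ω ^ 2 / 4)

theorem green_function_closed_form (ω₀ : ℝ) (hω : 0 < ω₀) (x : ℤ) :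
    ∫ u in (0:ℝ)..1, Real.cos (2 * π * u * (x : ℝ)) / (4 * Real.sin (π * u) ^ 2 + ω₀ ^ 2)
      = (1 / (ω₀ * Real.sqrt (ω₀ ^ 2 + 4))) *
        (1 + ω₀ ^ 2 / 2 + ω₀ * Real.sqrt (1 + ω₀ ^ 2 / 4)) ^ (-|x|) := by
  have hr : 1 < 1 + ω₀ ^ 2 / 2 + ω₀ * √(1 + ω₀ ^ 2 / 4) := by
    rw [add_assoc]
    exact lt_add_of_pos_right 1 (by positivity)
  have hρ_eq := inv_one_add_sq_div_two_add_mul_sqrt ω₀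
  set r := 1 + ω₀ ^ 2 / 2 + ω₀ * √(1 + ω₀ ^ 2 / 4)
  set ρ := r⁻¹ with hρ_def
  have hρ_inv : ρ⁻¹ = r := inv_inv r
  have hsum : ω₀ ^ 2 = ρ + ρ⁻¹ - 2 := by rw [hρ_inv, hρ_eq]; ring
  have hdiff : ρ⁻¹ - ρ = ω₀ * √(ω₀ ^ 2 + 4) := by
    rw [hρ_inv, hρ_eq, show ω₀ ^ 2 + 4 = 2 ^ 2 * (1 + ω₀ ^ 2 / 4) by ring,
      Real.sqrt_mul' _ (by positivity), Real.sqrt_sq zero_le_two]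
    ring
  have hρ₀ : 0 < ρ := by positivity
  have hρ₁ : ρ < 1 := inv_lt_one_of_one_lt₀ hr
  calc _ = ∫ u in (0:ℝ)..1, (ρ⁻¹ - ρ)⁻¹ * (Real.cos (2 * π * u * x) *
          ((1 - ρ ^ 2) / (1 - 2 * ρ * Real.cos (2 * π * u) + ρ ^ 2))) := by
        refine integral_congr fun u _ ↦ ?_
        rw [div_eq_mul_inv, hsum,
          inv_four_sin_sq_add_eq hρ₀.ne' (pow_lt_one₀ hρ₀.le hρ₁ two_ne_zero).ne]
        ring
    _ = _ := by
      rw [integral_const_mul, integral_cos_mul_poissonKernel (by rwa [abs_of_pos hρ₀]), hdiff,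
        hρ_def, inv_zpow', one_div]
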